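/- For every n, the number of noncrossing perfect matchings of Fin (2n) equals the n-th Catalan number (Mathlib's `catalan n`). -/
import Mathlib

namespace NCMP

abbrev IsNCM {N : ℕ} (f : Fin N → Fin N) : Prop :=
  Function.Involutive f ∧ (∀ i, f i ≠ i) ∧
    ¬ ∃ a b c d : Fin N, a < b ∧ b < c ∧ c < d ∧ f a = c ∧ f b = d

abbrev NCM (n : ℕ) : Type :=
  {f : Fin (2 * n) → Fin (2 * n) //
    Function.Involutive f ∧ (∀ i, f i ≠ i) ∧
    ¬ ∃ a b c d : Fin (2 * n), a < b ∧ b < c ∧ c < d ∧ f a = c ∧ f b = d}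


/-- no crossing, value form -/
lemma no_cross {N : ℕ} {f : Fin N → Fin N} (hf : IsNCM f) {a b c d : Fin N}
    (h1 : (a : ℕ) < b) (h2 : (b : ℕ) < c) (h3 : (c : ℕ) < d)
    (h4 : f a = c) (h5 : f b = d) : False :=
  hf.2.2 ⟨a, b, c, d, by rwa [Fin.lt_def], by rwa [Fin.lt_def], by rwa [Fin.lt_def], h4, h5⟩

lemma val_ne {N : ℕ} {x y : Fin N} (h : x ≠ y) : (x : ℕ) ≠ y := fun h' => h (Fin.ext h')

/-- parity helper -/
lemma even_card_of_invol (s : Finset ℕ) (F : ℕ → ℕ) (h1 : ∀ a ∈ s, F a ∈ s)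
    (h2 : ∀ a ∈ s, F a ≠ a) (h3 : ∀ a ∈ s, F (F a) = a) : Even s.card := by
  induction s using Finset.strongInduction with
  | _ s ih =>
    rcases Finset.eq_empty_or_nonempty s with rfl | ⟨a, ha⟩
    · simp
    · have hFa : F a ∈ s := h1 a ha
      have hne : F a ≠ a := h2 a ha
      set t : Finset ℕ := (s.erase a).erase (F a) with ht
      have hsub : t ⊆ s := (Finset.erase_subset _ _).trans (Finset.erase_subset _ _)
      have htss : t ⊂ s := by
        refine hsub.ssubset_of_ne ?_
        intro h
        have : a ∈ t := h ▸ ha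
        simp [ht, Finset.mem_erase] at this
      have hmem : ∀ b ∈ t, b ∈ s ∧ b ≠ a ∧ b ≠ F a := by
        intro b hb
        simp only [ht, Finset.mem_erase] at hb
        exact ⟨hb.2.2, hb.2.1, hb.1⟩
      have ht1 : ∀ b ∈ t, F b ∈ t := by
        intro b hb
        obtain ⟨hbs, hba, hbf⟩ := hmem b hb
        have hFb : F b ∈ s := h1 b hbs
        have : F b ≠ F a := fun h => hba (by rw [← h3 b hbs, h, h3 a ha])
        have : F b ≠ a := fun h => hbf (by rw [← h3 b hbs, h])
        simp only [ht, Finset.mem_erase]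
        exact ⟨‹F b ≠ F a›, ‹F b ≠ a›, hFb⟩
      have hcard : s.card = t.card + 2 := by
        have h1' : (s.erase a).card = s.card - 1 := Finset.card_erase_of_mem ha
        have hFa' : F a ∈ s.erase a := Finset.mem_erase.mpr ⟨hne, hFa⟩
        have h2' : t.card = (s.erase a).card - 1 := Finset.card_erase_of_mem hFa'
        have hpos : 0 < s.card := Finset.card_pos.mpr ⟨a, ha⟩
        have hpos2 : 0 < (s.erase a).card := Finset.card_pos.mpr ⟨F a, hFa'⟩
        omega
      have := ih t htss ht1 (fun b hb => h2 b (hmem b hb).1) (fun b hb => h3 b (hmem b hb).1)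
      obtain ⟨r, hr⟩ := this
      exact ⟨r + 1, by omega⟩

section
variable {n : ℕ} {f : Fin (2*(n+1)) → Fin (2*(n+1))}

lemma f0_pos (hf : IsNCM f) : 0 < (f ⟨0, by omega⟩).val := by
  have h := val_ne (hf.2.1 ⟨0, by omega⟩)
  simp only [Fin.val_mk] at h
  omega

lemma inner_mem (hf : IsNCM f) (k : Fin (2*(n+1))) (h1 : 0 < k.val)
    (h2 : k.val < (f ⟨0, by omega⟩).val) :
    0 < (f k).val ∧ (f k).val < (f ⟨0, by omega⟩).val := by
  have hinj := hf.1.injective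
  have hne0 : (f k).val ≠ 0 := by
    intro h
    have hfk : f k = ⟨0, by omega⟩ := Fin.ext h
    have : k = f ⟨0, by omega⟩ := by rw [← hf.1 k, hfk]
    omega
  have hnej : (f k).val ≠ (f ⟨0, by omega⟩).val := by
    intro h
    have : k = (⟨0, by omega⟩ : Fin (2*(n+1))) := hinj (Fin.ext h)
    have : k.val = 0 := by rw [this]
    omega
  have hlt : ¬ ((f ⟨0, by omega⟩).val < (f k).val) := fun hlt =>
    no_cross hf (a := ⟨0, by omega⟩) (b := k) h1 h2 hlt rfl rfl
  omega

lemma outer_mem (hf : IsNCM f) (k : Fin (2*(n+1)))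
    (h2 : (f ⟨0, by omega⟩).val < k.val) :
    (f ⟨0, by omega⟩).val < (f k).val := by
  have hz := f0_pos hf
  have hne0 : (f k).val ≠ 0 := by
    intro h
    have hfk : f k = ⟨0, by omega⟩ := Fin.ext h
    have : k = f ⟨0, by omega⟩ := by rw [← hf.1 k, hfk]
    omega
  have hnej : (f k).val ≠ (f ⟨0, by omega⟩).val := by
    intro h
    have : k = (⟨0, by omega⟩ : Fin (2*(n+1))) := hf.1.injective (Fin.ext h)
    have : k.val = 0 := by rw [this]
    omega
  by_contra hcon
  have hin := inner_mem hf (f k) (by omega) (by omega)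
  rw [hf.1 k] at hin
  omega

lemma f0_odd (hf : IsNCM f) : ∃ a : ℕ, a ≤ n ∧ (f ⟨0, by omega⟩).val = 2*a + 1 := by
  set j := (f ⟨0, by omega⟩).val with hj
  have hj0 : 0 < j := f0_pos hf
  have hjlt : j < 2*(n+1) := (f ⟨0, by omega⟩).isLt
  set F : ℕ → ℕ := fun m => if h : m < 2*(n+1) then (f ⟨m, h⟩).val else m with hF
  have key : Even (Finset.Ioo 0 j).card := by
    apply even_card_of_invol _ F
    · intro a ha
      rw [Finset.mem_Ioo] at ha ⊢
      have hab : a < 2*(n+1) := by omega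
      have := inner_mem hf ⟨a, hab⟩ ha.1 ha.2
      simp only [hF, dif_pos hab]
      exact this
    · intro a ha
      rw [Finset.mem_Ioo] at ha
      have hab : a < 2*(n+1) := by omega
      simp only [hF, dif_pos hab]
      exact val_ne (hf.2.1 ⟨a, hab⟩)
    · intro a ha
      rw [Finset.mem_Ioo] at ha
      have hab : a < 2*(n+1) := by omega
      have h2 : (f ⟨a, hab⟩).val < 2*(n+1) := (f ⟨a, hab⟩).isLt
      simp only [hF, dif_pos hab, dif_pos h2]
      have he : (⟨(f ⟨a, hab⟩).val, h2⟩ : Fin (2*(n+1))) = f ⟨a, hab⟩ := Fin.eta _ _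
      rw [he, hf.1]
  rw [Nat.card_Ioo] at key
  obtain ⟨r, hr⟩ := key
  exact ⟨r, by omega, by omega⟩

end

section
variable {n : ℕ} {f : Fin (2*(n+1)) → Fin (2*(n+1))} {a : ℕ}

def restrictIn (f : Fin (2*(n+1)) → Fin (2*(n+1))) (a : ℕ) (_ : a ≤ n) (k : Fin (2*a)) :
    Fin (2*a) :=
  ⟨min ((f ⟨k.val+1, by have := k.isLt; omega⟩).val - 1) (2*a-1),
    Nat.lt_of_le_of_lt (Nat.min_le_right _ _) (by have := k.isLt; omega)⟩

def restrictOut (f : Fin (2*(n+1)) → Fin (2*(n+1))) (a : ℕ) (ha : a ≤ n) (k : Fin (2*(n-a))) :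
    Fin (2*(n-a)) :=
  ⟨min ((f ⟨k.val + (2*a+2), by have := k.isLt; omega⟩).val - (2*a+2)) (2*(n-a)-1),
    Nat.lt_of_le_of_lt (Nat.min_le_right _ _) (by have := k.isLt; omega)⟩

lemma restrictIn_val (hf : IsNCM f) (ha : a ≤ n)
    (hj : (f ⟨0, by omega⟩).val = 2*a+1) (k : Fin (2*a)) (hk : k.val + 1 < 2*(n+1)) :
    (restrictIn f a ha k).val = (f ⟨k.val+1, hk⟩).val - 1 ∧
      0 < (f ⟨k.val+1, hk⟩).val ∧ (f ⟨k.val+1, hk⟩).val < 2*a+1 := by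
  have hklt := k.isLt
  have hmem := inner_mem hf ⟨k.val+1, hk⟩ (by simp) (by rw [hj]; simp only [Fin.val_mk]; omega)
  rw [hj] at hmem
  refine ⟨?_, hmem.1, hmem.2⟩
  simp only [restrictIn]
  exact Nat.min_eq_left (by omega)

lemma restrictOut_val (hf : IsNCM f) (ha : a ≤ n)
    (hj : (f ⟨0, by omega⟩).val = 2*a+1) (k : Fin (2*(n-a)))
    (hk : k.val + (2*a+2) < 2*(n+1)) :
    (restrictOut f a ha k).val = (f ⟨k.val + (2*a+2), hk⟩).val - (2*a+2) ∧
      2*a+1 < (f ⟨k.val + (2*a+2), hk⟩).val := by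
  have hklt := k.isLt
  have hmem := outer_mem hf ⟨k.val + (2*a+2), hk⟩ (by rw [hj]; simp only [Fin.val_mk]; omega)
  rw [hj] at hmem
  have hlt := (f ⟨k.val + (2*a+2), hk⟩).isLt
  refine ⟨?_, hmem⟩
  simp only [restrictOut]
  exact Nat.min_eq_left (by omega)

lemma isNCM_restrictIn (hf : IsNCM f) (ha : a ≤ n)
    (hj : (f ⟨0, by omega⟩).val = 2*a+1) : IsNCM (restrictIn f a ha) := by
  refine ⟨?_, ?_, ?_⟩
  · intro k
    have hklt := k.isLt
    obtain ⟨e1, p1, l1⟩ := restrictIn_val hf ha hj k (by omega)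
    have hklt2 := (restrictIn f a ha k).isLt
    obtain ⟨e2, p2, l2⟩ := restrictIn_val hf ha hj (restrictIn f a ha k) (by omega)
    apply Fin.ext
    rw [e2]
    have hx : (⟨(restrictIn f a ha k).val + 1, by omega⟩ : Fin (2*(n+1))) =
        f ⟨k.val+1, by omega⟩ := by
      apply Fin.ext
      simp only [Fin.val_mk]
      omega
    rw [hx, hf.1]
    simp
  · intro k hk
    have hklt := k.isLt
    obtain ⟨e1, p1, l1⟩ := restrictIn_val hf ha hj k (by omega)
    have hkv : (restrictIn f a ha k).val = k.val := by rw [hk]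
    have : f ⟨k.val+1, by omega⟩ = ⟨k.val+1, by omega⟩ := by
      apply Fin.ext
      simp only [Fin.val_mk]
      omega
    exact hf.2.1 _ this
  · rintro ⟨p, q, r, s, h1, h2, h3, h4, h5⟩
    rw [Fin.lt_def] at h1 h2 h3
    have hp := p.isLt; have hq := q.isLt; have hr := r.isLt; have hs := s.isLt
    obtain ⟨e1, p1, l1⟩ := restrictIn_val hf ha hj p (by omega)
    obtain ⟨e2, p2, l2⟩ := restrictIn_val hf ha hj q (by omega)
    have h4' : (restrictIn f a ha p).val = r.val := by rw [h4]
    have h5' : (restrictIn f a ha q).val = s.val := by rw [h5]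
    exact no_cross hf (a := ⟨p.val+1, by omega⟩) (b := ⟨q.val+1, by omega⟩)
      (c := ⟨r.val+1, by omega⟩) (d := ⟨s.val+1, by omega⟩)
      (by simp only [Fin.val_mk]; omega) (by simp only [Fin.val_mk]; omega) (by simp only [Fin.val_mk]; omega)
      (Fin.ext (by simp only [Fin.val_mk]; omega))
      (Fin.ext (by simp only [Fin.val_mk]; omega))

lemma isNCM_restrictOut (hf : IsNCM f) (ha : a ≤ n)
    (hj : (f ⟨0, by omega⟩).val = 2*a+1) : IsNCM (restrictOut f a ha) := by
  refine ⟨?_, ?_, ?_⟩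
  · intro k
    have hklt := k.isLt
    obtain ⟨e1, l1⟩ := restrictOut_val hf ha hj k (by omega)
    have hlt1 := (f ⟨k.val + (2*a+2), by omega⟩).isLt
    have hklt2 := (restrictOut f a ha k).isLt
    obtain ⟨e2, l2⟩ := restrictOut_val hf ha hj (restrictOut f a ha k) (by omega)
    apply Fin.ext
    rw [e2]
    have hx : (⟨(restrictOut f a ha k).val + (2*a+2), by omega⟩ : Fin (2*(n+1))) =
        f ⟨k.val + (2*a+2), by omega⟩ := by
      apply Fin.ext
      simp only [Fin.val_mk]
      omega
    rw [hx, hf.1]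
    simp
  · intro k hk
    have hklt := k.isLt
    obtain ⟨e1, l1⟩ := restrictOut_val hf ha hj k (by omega)
    have hkv : (restrictOut f a ha k).val = k.val := by rw [hk]
    have : f ⟨k.val + (2*a+2), by omega⟩ = ⟨k.val + (2*a+2), by omega⟩ := by
      apply Fin.ext
      simp only [Fin.val_mk]
      have hlt1 := (f ⟨k.val + (2*a+2), by omega⟩).isLt
      omega
    exact hf.2.1 _ this
  · rintro ⟨p, q, r, s, h1, h2, h3, h4, h5⟩
    rw [Fin.lt_def] at h1 h2 h3
    have hp := p.isLt; have hq := q.isLt; have hr := r.isLt; have hs := s.isLt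
    obtain ⟨e1, l1⟩ := restrictOut_val hf ha hj p (by omega)
    obtain ⟨e2, l2⟩ := restrictOut_val hf ha hj q (by omega)
    have hlt1 := (f ⟨p.val + (2*a+2), by omega⟩).isLt
    have hlt2 := (f ⟨q.val + (2*a+2), by omega⟩).isLt
    have h4' : (restrictOut f a ha p).val = r.val := by rw [h4]
    have h5' : (restrictOut f a ha q).val = s.val := by rw [h5]
    exact no_cross hf (a := ⟨p.val + (2*a+2), by omega⟩) (b := ⟨q.val + (2*a+2), by omega⟩)
      (c := ⟨r.val + (2*a+2), by omega⟩) (d := ⟨s.val + (2*a+2), by omega⟩)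
      (by simp only [Fin.val_mk]; omega) (by simp only [Fin.val_mk]; omega) (by simp only [Fin.val_mk]; omega)
      (Fin.ext (by simp only [Fin.val_mk]; omega))
      (Fin.ext (by simp only [Fin.val_mk]; omega))

end

section
variable {n a : ℕ}

def combine (a : ℕ) (ha : a ≤ n) (g : Fin (2*a) → Fin (2*a))
    (h : Fin (2*(n-a)) → Fin (2*(n-a))) (k : Fin (2*(n+1))) : Fin (2*(n+1)) :=
  if h0 : k.val = 0 then ⟨2*a+1, by omega⟩
  else if hj : k.val = 2*a+1 then ⟨0, by omega⟩
  else if hlt : k.val < 2*a+1 then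
    ⟨(g ⟨k.val - 1, by omega⟩).val + 1, by have := (g ⟨k.val - 1, by omega⟩).isLt; omega⟩
  else
    ⟨(h ⟨k.val - (2*a+2), by have := k.isLt; omega⟩).val + (2*a+2),
      by have := (h ⟨k.val - (2*a+2), by have := k.isLt; omega⟩).isLt; omega⟩

variable {ha : a ≤ n} {g : Fin (2*a) → Fin (2*a)} {h : Fin (2*(n-a)) → Fin (2*(n-a))}

lemma combine_val0 (k : Fin (2*(n+1))) (hk : k.val = 0) :
    (combine a ha g h k).val = 2*a+1 := by
  simp only [combine, dif_pos hk]

lemma combine_valj (k : Fin (2*(n+1))) (hk : k.val = 2*a+1) :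
    (combine a ha g h k).val = 0 := by
  simp only [combine]
  rw [dif_neg (by omega), dif_pos hk]

lemma combine_val_in (k : Fin (2*(n+1))) (h1 : 0 < k.val) (h2 : k.val ≤ 2*a)
    (hb : k.val - 1 < 2*a) :
    (combine a ha g h k).val = (g ⟨k.val - 1, hb⟩).val + 1 := by
  simp only [combine]
  rw [dif_neg (by omega), dif_neg (by omega), dif_pos (by omega)]

lemma combine_val_out (k : Fin (2*(n+1))) (h1 : 2*a+2 ≤ k.val)
    (hb : k.val - (2*a+2) < 2*(n-a)) :
    (combine a ha g h k).val = (h ⟨k.val - (2*a+2), hb⟩).val + (2*a+2) := by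
  simp only [combine]
  rw [dif_neg (by omega), dif_neg (by omega), dif_neg (by omega)]

lemma isNCM_combine (hg : IsNCM g) (hh : IsNCM h) : IsNCM (combine a ha g h) := by
  have key : ∀ k : Fin (2*(n+1)), combine a ha g h (combine a ha g h k) = k := by
    intro k
    have hklt := k.isLt
    rcases Nat.lt_or_ge 0 k.val with h1 | h1
    rotate_left
    · -- k.val = 0
      have hk0 : k.val = 0 := by omega
      have e1 := combine_val0 (ha := ha) (g := g) (h := h) k hk0
      apply Fin.ext
      rw [combine_valj _ e1, hk0]
    rcases Nat.lt_or_ge k.val (2*a+1) with h2 | h2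
    · -- inner
      have hb : k.val - 1 < 2*a := by omega
      have e1 := combine_val_in (ha := ha) (g := g) (h := h) k h1 (by omega) hb
      have hglt := (g ⟨k.val - 1, hb⟩).isLt
      have e2 := combine_val_in (ha := ha) (g := g) (h := h) (combine a ha g h k)
        (by omega) (by omega) (by omega)
      apply Fin.ext
      rw [e2]
      have hx : (⟨(combine a ha g h k).val - 1, by omega⟩ : Fin (2*a)) = g ⟨k.val - 1, hb⟩ :=
        Fin.ext (by simp only [Fin.val_mk]; omega)
      rw [hx, hg.1]
      simp only [Fin.val_mk]
      omega
    rcases Nat.eq_or_lt_of_le h2 with h3 | h3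
    · -- k.val = 2*a+1
      have e1 := combine_valj (ha := ha) (g := g) (h := h) k h3.symm
      apply Fin.ext
      rw [combine_val0 _ e1, h3]
    · -- outer
      have hb : k.val - (2*a+2) < 2*(n-a) := by omega
      have e1 := combine_val_out (ha := ha) (g := g) (h := h) k (by omega) hb
      have hhlt := (h ⟨k.val - (2*a+2), hb⟩).isLt
      have e2 := combine_val_out (ha := ha) (g := g) (h := h) (combine a ha g h k)
        (by omega) (by omega)
      apply Fin.ext
      rw [e2]
      have hx : (⟨(combine a ha g h k).val - (2*a+2), by omega⟩ : Fin (2*(n-a))) =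
          h ⟨k.val - (2*a+2), hb⟩ :=
        Fin.ext (by simp only [Fin.val_mk]; omega)
      rw [hx, hh.1]
      simp only [Fin.val_mk]
      omega
  refine ⟨key, ?_, ?_⟩
  · intro k hk
    have hklt := k.isLt
    rcases Nat.lt_or_ge 0 k.val with h1 | h1
    rotate_left
    · have hk0 : k.val = 0 := by omega
      have e1 := combine_val0 (ha := ha) (g := g) (h := h) k hk0
      have := congrArg Fin.val hk
      omega
    rcases Nat.lt_or_ge k.val (2*a+1) with h2 | h2
    · have hb : k.val - 1 < 2*a := by omega
      have e1 := combine_val_in (ha := ha) (g := g) (h := h) k h1 (by omega) hb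
      have := congrArg Fin.val hk
      rw [e1] at this
      exact hg.2.1 ⟨k.val - 1, hb⟩ (Fin.ext (by simp only [Fin.val_mk]; omega))
    rcases Nat.eq_or_lt_of_le h2 with h3 | h3
    · have e1 := combine_valj (ha := ha) (g := g) (h := h) k h3.symm
      have := congrArg Fin.val hk
      omega
    · have hb : k.val - (2*a+2) < 2*(n-a) := by omega
      have e1 := combine_val_out (ha := ha) (g := g) (h := h) k (by omega) hb
      have := congrArg Fin.val hk
      rw [e1] at this
      exact hh.2.1 ⟨k.val - (2*a+2), hb⟩ (Fin.ext (by simp only [Fin.val_mk]; omega))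
  · rintro ⟨p, q, r, s, h1, h2, h3, h4, h5⟩
    rw [Fin.lt_def] at h1 h2 h3
    have hp := p.isLt; have hq := q.isLt; have hr := r.isLt; have hs := s.isLt
    have h4' := congrArg Fin.val h4
    have h5' := congrArg Fin.val h5
    -- zone analysis on p
    rcases Nat.lt_or_ge 0 p.val with hp1 | hp1
    rotate_left
    · -- p.val = 0, r.val = 2*a+1, q in (0, 2*a+1), s > 2*a+1
      have hp0 : p.val = 0 := by omega
      have e1 := combine_val0 (ha := ha) (g := g) (h := h) p hp0
      have hrv : r.val = 2*a+1 := by omega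
      -- q is inner
      have hbq : q.val - 1 < 2*a := by omega
      have e2 := combine_val_in (ha := ha) (g := g) (h := h) q (by omega) (by omega) hbq
      have := (g ⟨q.val - 1, hbq⟩).isLt
      omega
    rcases Nat.lt_or_ge p.val (2*a+1) with hp2 | hp2
    · -- p inner, so r inner; q strictly between them is inner; s = combine q
      have hbp : p.val - 1 < 2*a := by omega
      have e1 := combine_val_in (ha := ha) (g := g) (h := h) p hp1 (by omega) hbp
      have hg1 := (g ⟨p.val - 1, hbp⟩).isLt
      -- r.val ≤ 2*a
      have hbq : q.val - 1 < 2*a := by omega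
      have e2 := combine_val_in (ha := ha) (g := g) (h := h) q (by omega) (by omega) hbq
      have hg2 := (g ⟨q.val - 1, hbq⟩).isLt
      exact hg.2.2 ⟨⟨p.val - 1, hbp⟩, ⟨q.val - 1, hbq⟩, ⟨r.val - 1, by omega⟩,
        ⟨s.val - 1, by omega⟩,
        by rw [Fin.lt_def]; simp only [Fin.val_mk]; omega,
        by rw [Fin.lt_def]; simp only [Fin.val_mk]; omega,
        by rw [Fin.lt_def]; simp only [Fin.val_mk]; omega,
        Fin.ext (by simp only [Fin.val_mk]; omega),
        Fin.ext (by simp only [Fin.val_mk]; omega)⟩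
    rcases Nat.eq_or_lt_of_le hp2 with hp3 | hp3
    · -- p.val = 2*a+1, r.val = 0 but r > p, contradiction
      have e1 := combine_valj (ha := ha) (g := g) (h := h) p hp3.symm
      omega
    · -- p outer, r outer, q outer, s outer
      have hbp : p.val - (2*a+2) < 2*(n-a) := by omega
      have e1 := combine_val_out (ha := ha) (g := g) (h := h) p (by omega) hbp
      have hh1 := (h ⟨p.val - (2*a+2), hbp⟩).isLt
      have hbq : q.val - (2*a+2) < 2*(n-a) := by omega
      have e2 := combine_val_out (ha := ha) (g := g) (h := h) q (by omega) hbq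
      have hh2 := (h ⟨q.val - (2*a+2), hbq⟩).isLt
      exact hh.2.2 ⟨⟨p.val - (2*a+2), hbp⟩, ⟨q.val - (2*a+2), hbq⟩,
        ⟨r.val - (2*a+2), by omega⟩, ⟨s.val - (2*a+2), by omega⟩,
        by rw [Fin.lt_def]; simp only [Fin.val_mk]; omega,
        by rw [Fin.lt_def]; simp only [Fin.val_mk]; omega,
        by rw [Fin.lt_def]; simp only [Fin.val_mk]; omega,
        Fin.ext (by simp only [Fin.val_mk]; omega),
        Fin.ext (by simp only [Fin.val_mk]; omega)⟩

end

section
variable {n a : ℕ} {f : Fin (2*(n+1)) → Fin (2*(n+1))}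
variable {ha : a ≤ n} {g : Fin (2*a) → Fin (2*a)} {h : Fin (2*(n-a)) → Fin (2*(n-a))}

lemma restrictIn_combine : restrictIn (combine a ha g h) a ha = g := by
  funext k
  have hk := k.isLt
  apply Fin.ext
  have hb : (k.val + 1) - 1 < 2*a := by omega
  have e := combine_val_in (ha := ha) (g := g) (h := h) ⟨k.val+1, by omega⟩
    (by simp only [Fin.val_mk]; omega) (by simp only [Fin.val_mk]; omega)
    (by simp only [Fin.val_mk]; omega)
  simp only [Fin.val_mk] at e
  have hx : (⟨k.val + 1 - 1, hb⟩ : Fin (2*a)) = k := Fin.ext (by simp only [Fin.val_mk]; omega)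
  rw [hx] at e
  have hgk := (g k).isLt
  simp only [restrictIn, Fin.val_mk, e]
  omega

lemma restrictOut_combine : restrictOut (combine a ha g h) a ha = h := by
  funext k
  have hk := k.isLt
  apply Fin.ext
  have hb : (k.val + (2*a+2)) - (2*a+2) < 2*(n-a) := by omega
  have e := combine_val_out (ha := ha) (g := g) (h := h) ⟨k.val + (2*a+2), by omega⟩
    (by simp only [Fin.val_mk]; omega) (by simp only [Fin.val_mk]; omega)
  simp only [Fin.val_mk] at e
  have hx : (⟨k.val + (2*a+2) - (2*a+2), hb⟩ : Fin (2*(n-a))) = k :=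
    Fin.ext (by simp only [Fin.val_mk]; omega)
  rw [hx] at e
  have hhk := (h k).isLt
  simp only [restrictOut, Fin.val_mk, e]
  omega

lemma combine_restrict (hf : IsNCM f) (ha' : a ≤ n)
    (hj : (f ⟨0, by omega⟩).val = 2*a+1) :
    combine a ha' (restrictIn f a ha') (restrictOut f a ha') = f := by
  funext k
  have hk := k.isLt
  apply Fin.ext
  rcases Nat.lt_or_ge 0 k.val with h1 | h1
  rotate_left
  · -- k.val = 0
    have hk0 : k.val = 0 := by omega
    rw [combine_val0 k hk0]
    have : k = (⟨0, by omega⟩ : Fin (2*(n+1))) := Fin.ext hk0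
    rw [this, hj]
  rcases Nat.lt_or_ge k.val (2*a+1) with h2 | h2
  · -- inner
    have hb : k.val - 1 < 2*a := by omega
    rw [combine_val_in k h1 (by omega) hb]
    obtain ⟨e, hpos, _⟩ := restrictIn_val hf ha' hj ⟨k.val - 1, hb⟩
      (by simp only [Fin.val_mk]; omega)
    simp only [Fin.val_mk] at e hpos
    have hx : (⟨k.val - 1 + 1, by omega⟩ : Fin (2*(n+1))) = k :=
      Fin.ext (by simp only [Fin.val_mk]; omega)
    rw [hx] at e hpos
    omega
  rcases Nat.eq_or_lt_of_le h2 with h3 | h3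
  · -- k.val = 2*a+1
    rw [combine_valj k h3.symm]
    have hzk : k = f ⟨0, by omega⟩ := Fin.ext (by omega)
    rw [hzk, hf.1]
  · -- outer
    have hb : k.val - (2*a+2) < 2*(n-a) := by omega
    rw [combine_val_out k (by omega) hb]
    obtain ⟨e, hgt⟩ := restrictOut_val hf ha' hj ⟨k.val - (2*a+2), hb⟩
      (by simp only [Fin.val_mk]; omega)
    simp only [Fin.val_mk] at e hgt
    have hx : (⟨k.val - (2*a+2) + (2*a+2), by omega⟩ : Fin (2*(n+1))) = k :=
      Fin.ext (by simp only [Fin.val_mk]; omega)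
    rw [hx] at e hgt
    omega

end

def idx {n : ℕ} (F : NCM (n+1)) : Fin (n+1) :=
  ⟨((F.1 ⟨0, by omega⟩).val - 1)/2, by have := (F.1 ⟨0, by omega⟩).isLt; omega⟩

lemma f0_val_eq {n : ℕ} (F : NCM (n+1)) {i : Fin (n+1)} (hi : idx F = i) :
    (F.1 ⟨0, by omega⟩).val = 2*i.val+1 := by
  obtain ⟨b, hbn, he⟩ := f0_odd F.2
  have h2 := congrArg Fin.val hi
  simp only [idx, Fin.val_mk] at h2
  rw [he] at h2 ⊢
  omega

def fiberEquiv (n : ℕ) (i : Fin (n+1)) :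
    {F : NCM (n+1) // idx F = i} ≃ NCM i.val × NCM (n - i.val) where
  toFun F :=
    (⟨restrictIn F.1.1 i.val (by have := i.isLt; omega),
      isNCM_restrictIn F.1.2 _ (f0_val_eq F.1 F.2)⟩,
     ⟨restrictOut F.1.1 i.val (by have := i.isLt; omega),
      isNCM_restrictOut F.1.2 _ (f0_val_eq F.1 F.2)⟩)
  invFun P :=
    ⟨⟨combine i.val (by have := i.isLt; omega) P.1.1 P.2.1, isNCM_combine P.1.2 P.2.2⟩, by
      apply Fin.ext
      simp only [idx, Fin.val_mk]
      rw [combine_val0 _ rfl]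
      omega⟩
  left_inv F := by
    apply Subtype.ext
    apply Subtype.ext
    have := combine_restrict F.1.2 (a := i.val) (by have := i.isLt; omega) (f0_val_eq F.1 F.2)
    exact this
  right_inv P := by
    apply Prod.ext
    · exact Subtype.ext (restrictIn_combine (ha := by have := i.isLt; omega))
    · exact Subtype.ext (restrictOut_combine (ha := by have := i.isLt; omega))

lemma nat_card_sigma {ι : Type*} [Fintype ι] (β : ι → Type*) [∀ i, Finite (β i)] :
    Nat.card (Σ i, β i) = ∑ i, Nat.card (β i) := by
  letI : ∀ i, Fintype (β i) := fun i => Fintype.ofFinite _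
  simp [Nat.card_eq_fintype_card, Fintype.card_sigma]

instance : Unique (NCM 0) where
  default := ⟨fun k => k, fun k => k.elim0, fun k => k.elim0, fun ⟨p, _⟩ => p.elim0⟩
  uniq := fun F => Subtype.ext (funext fun k => k.elim0)

lemma card_NCM (n : ℕ) : Nat.card (NCM n) = catalan n := by
  induction n using Nat.strong_induction_on with
  | _ n ih =>
    match n with
    | 0 => simp [Nat.card_unique, catalan_zero]
    | (m+1) =>
      calc Nat.card (NCM (m+1))
          = Nat.card (Σ i : Fin (m+1), {F : NCM (m+1) // idx F = i}) :=
            (Nat.card_congr (Equiv.sigmaFiberEquiv idx)).symm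
        _ = ∑ i : Fin (m+1), Nat.card {F : NCM (m+1) // idx F = i} :=
            nat_card_sigma _
        _ = ∑ i : Fin (m+1), catalan i.val * catalan (m - i.val) := by
            refine Finset.sum_congr rfl fun i _ => ?_
            rw [Nat.card_congr (fiberEquiv m i), Nat.card_prod,
              ih i.val (by have := i.isLt; omega), ih (m - i.val) (by omega)]
        _ = catalan (m+1) := (catalan_succ m).symm

end NCMP

/-- The number of noncrossing perfect matchings of `Fin (2n)` (encoded as
fixed-point-free involutions with no crossing pair of blocks) is the `n`-th
Catalan number. -/
theorem card_noncrossing_matchings (n : ℕ) :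
    Nat.card {f : Fin (2 * n) → Fin (2 * n) //
      Function.Involutive f ∧ (∀ i, f i ≠ i) ∧
      ¬ ∃ a b c d : Fin (2 * n), a < b ∧ b < c ∧ c < d ∧ f a = c ∧ f b = d} =
      catalan n := by
  exact NCMP.card_NCM n
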